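/- arXiv:0801.1419 — 2 statements merged into one kernel-verified Lean document; each statement's English description precedes it below -/
import Mathlib

section
/- Let S be a finite set with |S| = n, let Q ⊆ S with |Q| = q, and let α be a natural number with α ≤ n and q ≤ n. Then the number of pairs (A, B) of subsets of S with |A| = α, |B| = q and B ∩ (Q \ A) = ∅ equals Σ_{k=a}^{b} C(n+k-q, q)·C(q, k)·C(n-q, α-k), where a = max(0, α-n+q), b = min(α, q), and C(·,·) denotes the binomial coefficient (equal to 0 when the lower index exceeds the upper index). -/
/-!
For a fixed `A`, the admissible `B` are exactly the `q`-subsets of `S \ (Q \ A)`, a set of size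
`n + k - q` where `k = |A ∩ Q|`. Grouping the `A` by `k` and counting the `α`-subsets of `S` that
meet `Q` in exactly `k` points, `C(q, k) · C(n - q, α - k)` of them (choose `A ∩ Q` and `A \ Q`
independently), gives the sum; `k` ranges over `[α + q - n, min α q]` by inclusion–exclusion.
-/

open Finset

theorem card_filter_product_eq_sum {ι κ : Type*} (s : Finset ι) (t : Finset κ)
    (p : ι × κ → Prop) [DecidablePred p] :
    #{x ∈ s ×ˢ t | p x} = ∑ a ∈ s, #{b ∈ t | p (a, b)} := by
  simp only [card_filter, sum_product]

section

variable {β : Type*} [DecidableEq β] {S Q A : Finset β}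

theorem filter_powersetCard_inter_eq_empty (s t : Finset β) (r : ℕ) :
    {B ∈ s.powersetCard r | B ∩ t = ∅} = (s \ t).powersetCard r := by
  ext B
  simp only [mem_filter, mem_powersetCard, subset_sdiff, ← disjoint_iff_inter_eq_empty]
  tauto

theorem card_sdiff_sdiff_of_subset (hQS : Q ⊆ S) : #(S \ (Q \ A)) = #S + #(A ∩ Q) - #Q := by
  have : #(A ∩ Q) ≤ #Q := card_le_card inter_subset_right
  have : #Q ≤ #S := card_le_card hQS
  rw [card_sdiff_of_subset (sdiff_subset.trans hQS), card_sdiff]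
  omega

theorem card_inter_mem_Icc (hQS : Q ⊆ S) {r : ℕ} (hA : A ∈ S.powersetCard r) :
    #(A ∩ Q) ∈ Icc (r + #Q - #S) (min r #Q) := by
  obtain ⟨hAS, rfl⟩ := mem_powersetCard.mp hA
  have := card_union_add_card_inter A Q
  have := card_le_card (union_subset hAS hQS)
  have := card_le_card (inter_subset_left : A ∩ Q ⊆ A)
  have := card_le_card (inter_subset_right : A ∩ Q ⊆ Q)
  simp only [mem_Icc]
  omega

theorem card_filter_powersetCard_card_inter_eq (hQS : Q ⊆ S) {k r : ℕ} (hk : k ≤ r) :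
    #{A ∈ S.powersetCard r | #(A ∩ Q) = k} = (#Q).choose k * (#S - #Q).choose (r - k) := by
  rw [← card_sdiff_of_subset hQS, ← card_powersetCard, ← card_powersetCard, ← card_product]
  symm
  refine card_nbij' (fun p => p.1 ∪ p.2) (fun A => (A ∩ Q, A \ Q)) ?_ ?_ ?_ ?_
  · rintro ⟨X, Y⟩ h
    simp only [coe_product, Set.mem_prod, mem_coe, mem_powersetCard, subset_sdiff] at h
    obtain ⟨⟨hXQ, rfl⟩, ⟨hYS, hYQ⟩, hY⟩ := h
    have hXY : Disjoint X Y := hYQ.symm.mono_left hXQ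
    have hinter : (X ∪ Y) ∩ Q = X := by
      rw [union_inter_distrib_right, inter_eq_left.mpr hXQ, disjoint_iff_inter_eq_empty.mp hYQ,
        union_empty]
    simp only [mem_coe, mem_filter, mem_powersetCard, card_union_of_disjoint hXY, hinter]
    exact ⟨⟨union_subset (hXQ.trans hQS) hYS, by omega⟩, trivial⟩
  · intro A h
    simp only [mem_coe, mem_filter, mem_powersetCard] at h
    obtain ⟨⟨hAS, rfl⟩, hAQ⟩ := h
    simp only [coe_product, Set.mem_prod, mem_coe, mem_powersetCard]
    have := card_sdiff_add_card_inter A Q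
    exact ⟨⟨inter_subset_right, hAQ⟩, sdiff_subset_sdiff hAS subset_rfl, by omega⟩
  · rintro ⟨X, Y⟩ h
    simp only [coe_product, Set.mem_prod, mem_coe, mem_powersetCard, subset_sdiff] at h
    obtain ⟨⟨hXQ, -⟩, ⟨-, hYQ⟩, -⟩ := h
    ext x <;> simp only [mem_inter, mem_sdiff, mem_union] <;> grind [disjoint_left]
  · intro A _
    exact sup_inf_sdiff A Q

end

theorem core_miss_pair_count_general {β : Type*} [DecidableEq β]
    (S Q : Finset β) (n q α : ℕ)
    (hS : S.card = n) (hQS : Q ⊆ S) (hQ : Q.card = q) :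
    (((S.powersetCard α ×ˢ S.powersetCard q).filter
        (fun p => p.2 ∩ (Q \ p.1) = ∅)).card)
      = ∑ k ∈ Finset.Icc (α + q - n) (min α q),
          (n + k - q).choose q * q.choose k * (n - q).choose (α - k) := by
  subst hS hQ
  calc _ = ∑ A ∈ S.powersetCard α, (#S + #(A ∩ Q) - #Q).choose #Q := by
        rw [card_filter_product_eq_sum]
        refine sum_congr rfl fun A _ => ?_
        dsimp only
        rw [filter_powersetCard_inter_eq_empty, card_powersetCard, card_sdiff_sdiff_of_subset hQS]
    _ = ∑ k ∈ Icc (α + #Q - #S) (min α #Q),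
          #{A ∈ S.powersetCard α | #(A ∩ Q) = k} * (#S + k - #Q).choose #Q := by
        rw [← sum_fiberwise_of_maps_to fun A => card_inter_mem_Icc hQS]
        refine sum_congr rfl fun k _ => ?_
        rw [← smul_eq_mul, ← sum_const]
        exact sum_congr rfl fun A hA => by rw [(mem_filter.mp hA).2]
    _ = _ := by
        refine sum_congr rfl fun k hk => ?_
        rw [card_filter_powersetCard_card_inter_eq hQS ((mem_Icc.mp hk).2.trans (min_le_left _ _))]
        ring

theorem core_miss_pair_count {β : Type*} [DecidableEq β]
    (S Q : Finset β) (n q α : ℕ)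
    (hS : S.card = n) (hQS : Q ⊆ S) (hQ : Q.card = q) (hα : α ≤ n) (hq : q ≤ n) :
    (((S.powersetCard α ×ˢ S.powersetCard q).filter
        (fun p => p.2 ∩ (Q \ p.1) = ∅)).card)
      = ∑ k ∈ Finset.Icc (α + q - n) (min α q),
          (n + k - q).choose q * q.choose k * (n - q).choose (α - k) :=
  core_miss_pair_count_general S Q n q α hS hQS hQ
end

section
/- Let S be a finite set with |S| = n ≥ 1, let Q ⊆ S with |Q| = q, and let α be a natural number with α ≤ n and q ≤ n. Choose a subset A ⊆ S with |A| = α and a subset B ⊆ S with |B| = q, each uniformly at random and independently. Then the probability that B ∩ (Q \ A) = ∅ equals (Σ_{k=a}^{b} C(n+k-q, q)·C(q, k)·C(n-q, α-k)) / (C(n, q)·C(n, α)), where a = max(0, α-n+q), b = min(α, q), and C(·,·) denotes the binomial coefficient (equal to 0 when the lower index exceeds the upper index). Equivalently, the number of favorable pairs (A,B) divided by C(n,q)·C(n,α), as a rational number, equals that formula. -/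
/-- Number of `α`-subsets of `S` meeting `Q` in exactly `k` elements. -/
lemma fiber_card_aux {β : Type*} [DecidableEq β]
    (S Q : Finset β) (hQS : Q ⊆ S) (α k : ℕ) (hk : k ≤ α) :
    ((S.powersetCard α).filter (fun A => (A ∩ Q).card = k)).card
      = Q.card.choose k * (S \ Q).card.choose (α - k) := by
  rw [← Finset.card_powersetCard, ← Finset.card_powersetCard, ← Finset.card_product]
  apply Finset.card_bij (fun A _ => (A ∩ Q, A \ Q))
  · rintro A hA
    simp only [Finset.mem_filter, Finset.mem_powersetCard] at hA
    obtain ⟨⟨hAS, hAcard⟩, hAk⟩ := hA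
    simp only [Finset.mem_product, Finset.mem_powersetCard]
    refine ⟨⟨Finset.inter_subset_right, hAk⟩, ?_, ?_⟩
    · exact fun x hx => Finset.mem_sdiff.mpr
        ⟨hAS (Finset.mem_sdiff.mp hx).1, (Finset.mem_sdiff.mp hx).2⟩
    · have := Finset.card_inter_add_card_sdiff A Q
      omega
  · rintro A₁ h₁ A₂ h₂ h
    simp only [Prod.mk.injEq] at h
    have e1 : A₁ ∩ Q ∪ A₁ \ Q = A₂ ∩ Q ∪ A₂ \ Q := by rw [h.1, h.2]
    have self : ∀ A : Finset β, A ∩ Q ∪ A \ Q = A := by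
      intro A; ext x; simp only [Finset.mem_union, Finset.mem_inter, Finset.mem_sdiff]; tauto
    rwa [self, self] at e1
  · rintro ⟨C, D⟩ hCD
    simp only [Finset.mem_product, Finset.mem_powersetCard] at hCD
    obtain ⟨⟨hCQ, hCcard⟩, hDS, hDcard⟩ := hCD
    have hDQ : Disjoint D Q := by
      have := (Finset.subset_sdiff.mp hDS).2
      exact this
    have hCD' : Disjoint C D := by
      exact Finset.disjoint_right.mpr fun x hx hxC =>
        (Finset.disjoint_left.mp hDQ) hx (hCQ hxC)
    refine ⟨C ∪ D, ?_, ?_⟩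
    · simp only [Finset.mem_filter, Finset.mem_powersetCard]
      refine ⟨⟨Finset.union_subset (hCQ.trans hQS) ((Finset.subset_sdiff.mp hDS).1), ?_⟩, ?_⟩
      · rw [Finset.card_union_of_disjoint hCD', hCcard, hDcard]; omega
      · have : (C ∪ D) ∩ Q = C := by
          rw [Finset.union_inter_distrib_right, Finset.inter_eq_left.mpr hCQ,
            Finset.disjoint_iff_inter_eq_empty.mp hDQ, Finset.union_empty]
        rw [this, hCcard]
    · have h1 : (C ∪ D) ∩ Q = C := by
        rw [Finset.union_inter_distrib_right, Finset.inter_eq_left.mpr hCQ,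
          Finset.disjoint_iff_inter_eq_empty.mp hDQ, Finset.union_empty]
      have h2 : (C ∪ D) \ Q = D := by
        rw [Finset.union_sdiff_distrib, Finset.sdiff_eq_empty_iff_subset.mpr hCQ,
          Finset.empty_union, Finset.sdiff_eq_self_of_disjoint hDQ]
      rw [h1, h2]

/-- Number of `q`-subsets of `S` avoiding a fixed `T ⊆ S`. -/
lemma avoid_card_aux {β : Type*} [DecidableEq β]
    (S T : Finset β) (hTS : T ⊆ S) (q : ℕ) :
    ((S.powersetCard q).filter (fun B => B ∩ T = ∅)).card
      = (S.card - T.card).choose q := by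
  have : (S.powersetCard q).filter (fun B => B ∩ T = ∅) = (S \ T).powersetCard q := by
    ext B
    simp only [Finset.mem_filter, Finset.mem_powersetCard, Finset.subset_sdiff,
      ← Finset.disjoint_iff_inter_eq_empty]
    tauto
  rw [this, Finset.card_powersetCard, Finset.card_sdiff_of_subset hTS]

theorem core_miss_probability {β : Type*} [DecidableEq β]
    (S Q : Finset β) (n q α : ℕ) (hn : 1 ≤ n)
    (hS : S.card = n) (hQS : Q ⊆ S) (hQ : Q.card = q) (hα : α ≤ n) (hq : q ≤ n) :
    ((((S.powersetCard α ×ˢ S.powersetCard q).filter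
        (fun p => p.2 ∩ (Q \ p.1) = ∅)).card : ℚ)
        / ((n.choose q : ℚ) * (n.choose α : ℚ)))
      = (∑ k ∈ Finset.Icc (α + q - n) (min α q),
          (((n + k - q).choose q : ℚ) * (q.choose k : ℚ) * ((n - q).choose (α - k) : ℚ)))
        / ((n.choose q : ℚ) * (n.choose α : ℚ)) := by
  have key : (((S.powersetCard α ×ˢ S.powersetCard q).filter
        (fun p => p.2 ∩ (Q \ p.1) = ∅)).card : ℕ)
      = ∑ k ∈ Finset.Icc (α + q - n) (min α q),
          (n + k - q).choose q * (q.choose k) * ((n - q).choose (α - k)) := by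
    rw [Finset.card_filter, Finset.sum_product]
    have inner : ∀ A ∈ S.powersetCard α,
        (∑ B ∈ S.powersetCard q, if B ∩ (Q \ A) = ∅ then 1 else 0)
          = (n + (A ∩ Q).card - q).choose q := by
      intro A hA
      rw [← Finset.card_filter, avoid_card_aux S (Q \ A)
        ((Finset.sdiff_subset).trans hQS) q]
      have h1 : (Q ∩ A).card + (Q \ A).card = Q.card :=
        Finset.card_inter_add_card_sdiff Q A
      have h2 : (A ∩ Q).card = (Q ∩ A).card := by rw [Finset.inter_comm]
      have h3 : (A ∩ Q).card ≤ Q.card :=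
        Finset.card_le_card Finset.inter_subset_right
      rw [hS]
      congr 1
      omega
    rw [Finset.sum_congr rfl inner]
    have maps : ∀ A ∈ S.powersetCard α,
        (A ∩ Q).card ∈ Finset.Icc (α + q - n) (min α q) := by
      intro A hA
      rw [Finset.mem_powersetCard] at hA
      obtain ⟨hAS, hAcard⟩ := hA
      have h1 : (A ∩ Q).card + (A ∪ Q).card = A.card + Q.card :=
        Finset.card_inter_add_card_union A Q
      have h2 : (A ∪ Q).card ≤ n := by
        rw [← hS]; exact Finset.card_le_card (Finset.union_subset hAS hQS)
      have h3 : (A ∩ Q).card ≤ A.card :=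
        Finset.card_le_card Finset.inter_subset_left
      have h4 : (A ∩ Q).card ≤ Q.card :=
        Finset.card_le_card Finset.inter_subset_right
      rw [Finset.mem_Icc]
      omega
    rw [← Finset.sum_fiberwise_of_maps_to maps
      (fun A => (n + (A ∩ Q).card - q).choose q)]
    refine Finset.sum_congr rfl fun k hk => ?_
    rw [Finset.mem_Icc] at hk
    have hkα : k ≤ α := le_trans hk.2 (min_le_left _ _)
    calc (∑ A ∈ (S.powersetCard α).filter (fun A => (A ∩ Q).card = k),
            (n + (A ∩ Q).card - q).choose q)
        = ∑ A ∈ (S.powersetCard α).filter (fun A => (A ∩ Q).card = k),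
            (n + k - q).choose q := by
          refine Finset.sum_congr rfl fun A hA => ?_
          rw [(Finset.mem_filter.mp hA).2]
      _ = ((S.powersetCard α).filter (fun A => (A ∩ Q).card = k)).card
            * (n + k - q).choose q := by
          rw [Finset.sum_const, smul_eq_mul]
      _ = (n + k - q).choose q * (q.choose k) * ((n - q).choose (α - k)) := by
          rw [fiber_card_aux S Q hQS α k hkα, hQ, Finset.card_sdiff_of_subset hQS, hS, hQ]
          ring
  rw [key]
  push_cast
  ring
end
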